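/- If for a smooth function F : ℝ³ × ℝ → ℂ the transformation T(ψ)(y,t) = e^{F(y,t)} ψ(y − tv, t) satisfies S₀(Tψ) = T(S₀ψ) for all smooth ψ : ℝ³ × ℝ → ℂ, then F satisfies ∂_{y_k} F = (im/ℏ) v_k for each k, and i ∂_t F + (ℏ/2m)(Σ_k (∂_{y_k}F)² + Σ_k ∂²_{y_k}F) = 0. -/

import Mathlib

noncomputable section

abbrev Spt := EuclideanSpace ℝ (Fin 3) × ℝ

def dirS (k : Fin 3) : Spt := (EuclideanSpace.single k (1 : ℝ), 0)

def dirT : Spt := (0, 1)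

def pD (w : Spt) (ψ : Spt → ℂ) (p : Spt) : ℂ := fderiv ℝ ψ p w

/-- Free Schrödinger operator. -/
def S₀ (m ℏ : ℝ) (ψ : Spt → ℂ) (p : Spt) : ℂ :=
  Complex.I * ℏ * pD dirT ψ p +
    (ℏ ^ 2 / (2 * m)) * ∑ k : Fin 3, pD (dirS k) (pD (dirS k) ψ) p

open Complex

lemma pD_exp_mul (F : Spt → ℂ) (hF : ContDiff ℝ (⊤ : ℕ∞) F) (g : Spt → ℂ)
    (g' : Spt → Spt →L[ℝ] ℂ) (hg : ∀ p, HasFDerivAt g (g' p) p) (w : Spt) (p : Spt) :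
    pD w (fun q => cexp (F q) * g q) p =
      cexp (F p) * (pD w F p * g p + g' p w) := by
  have hFd : HasFDerivAt F (fderiv ℝ F p) p := (hF.differentiable (by simp) p).hasFDerivAt
  have h : fderiv ℝ (fun q => cexp (F q) * g q) p = _ := (hFd.cexp.mul (hg p)).fderiv
  simp only [pD, h, ContinuousLinearMap.add_apply, ContinuousLinearMap.smul_apply,
    smul_eq_mul]
  ring

lemma pD_exp_affine (F : Spt → ℂ) (hF : ContDiff ℝ (⊤ : ℕ∞) F) (c : ℂ) (A : Spt →L[ℝ] ℂ)
    (w : Spt) :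
    pD w (fun q => cexp (F q) * (c + A q)) =
      fun p => cexp (F p) * (pD w F p * (c + A p) + A w) := by
  funext p
  exact pD_exp_mul F hF _ (fun _ => A) (fun q => A.hasFDerivAt.const_add c) w p

lemma pD2_exp_affine (F : Spt → ℂ) (hF : ContDiff ℝ (⊤ : ℕ∞) F) (c : ℂ) (A : Spt →L[ℝ] ℂ)
    (w : Spt) (p : Spt) :
    pD w (pD w (fun q => cexp (F q) * (c + A q))) p =
      cexp (F p) * ((pD w F p ^ 2 + pD w (pD w F) p) * (c + A p)
        + 2 * pD w F p * A w) := by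
  have hFw : ContDiff ℝ (⊤ : ℕ∞) (pD w F) := (hF.fderiv_right (by simp)).clm_apply contDiff_const
  rw [pD_exp_affine F hF c A w]
  have key := pD_exp_mul F hF (fun q => pD w F q * (c + A q) + A w)
    (fun q => (pD w F q) • A + (c + A q) • fderiv ℝ (pD w F) q)
    (fun q => ((hFw.differentiable (by simp) q).hasFDerivAt.mul
      (A.hasFDerivAt.const_add c)).add_const (A w)) w p
  rw [key]
  simp only [pD, ContinuousLinearMap.add_apply, ContinuousLinearMap.smul_apply, smul_eq_mul]
  ring

lemma S₀_exp_affine (m ℏ : ℝ) (F : Spt → ℂ) (hF : ContDiff ℝ (⊤ : ℕ∞) F) (c : ℂ)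
    (A : Spt →L[ℝ] ℂ) (p : Spt) :
    S₀ m ℏ (fun q => cexp (F q) * (c + A q)) p =
      cexp (F p) * (Complex.I * ℏ * (pD dirT F p * (c + A p) + A dirT) +
        (ℏ ^ 2 / (2 * m)) * ∑ k : Fin 3,
          ((pD (dirS k) F p ^ 2 + pD (dirS k) (pD (dirS k) F) p) * (c + A p)
            + 2 * pD (dirS k) F p * A (dirS k))) := by
  simp only [S₀, pD2_exp_affine F hF, congrFun (pD_exp_affine F hF c A dirT) p]
  rw [← Finset.mul_sum]
  ring

lemma pD_const (w : Spt) (c : ℂ) : pD w (fun _ => c) = fun _ => 0 := by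
  funext q; simp [pD]

lemma pD_clm (w : Spt) (B : Spt →L[ℝ] ℂ) : pD w (⇑B) = fun _ => B w := by
  funext q; simp [pD, B.fderiv]

lemma S₀_one (m ℏ : ℝ) (q : Spt) : S₀ m ℏ (fun _ => (1 : ℂ)) q = 0 := by
  simp [S₀, pD_const]

lemma S₀_clm (m ℏ : ℝ) (B : Spt →L[ℝ] ℂ) (hB : B dirT = 0) (q : Spt) :
    S₀ m ℏ (⇑B) q = 0 := by
  simp [S₀, pD_clm, pD_const, hB]

/-- If `T(ψ) = e^F · (ψ ∘ Λ_v)` intertwines `S₀` with itself for all smooth `ψ`,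
then `F` satisfies the two PDEs. -/
theorem phase_function_equations (m ℏ : ℝ) (hm : m ≠ 0) (hh : ℏ ≠ 0)
    (v : EuclideanSpace ℝ (Fin 3)) (F : Spt → ℂ) (hF : ContDiff ℝ (⊤ : ℕ∞) F)
    (hT : ∀ ψ : Spt → ℂ, ContDiff ℝ (⊤ : ℕ∞) ψ →
      S₀ m ℏ (fun p => Complex.exp (F p) * ψ (p.1 - p.2 • v, p.2)) =
        fun p => Complex.exp (F p) * (S₀ m ℏ ψ) (p.1 - p.2 • v, p.2)) :
    (∀ k : Fin 3, ∀ p : Spt, pD (dirS k) F p = (Complex.I * m / ℏ) * (v k : ℂ)) ∧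
    (∀ p : Spt, Complex.I * pD dirT F p +
        ((ℏ / (2 * m) : ℝ) : ℂ) *
          ((∑ k : Fin 3, (pD (dirS k) F p) ^ 2) +
            ∑ k : Fin 3, pD (dirS k) (pD (dirS k) F) p) = 0) := by
  have hm' : (m : ℂ) ≠ 0 := by exact_mod_cast hm
  have hh' : (ℏ : ℂ) ≠ 0 := by exact_mod_cast hh
  -- Equation from ψ = 1
  have eq2 : ∀ p : Spt, Complex.I * ℏ * pD dirT F p +
      ((ℏ : ℂ) ^ 2 / (2 * m)) * ((∑ k : Fin 3, (pD (dirS k) F p) ^ 2)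
        + ∑ k : Fin 3, pD (dirS k) (pD (dirS k) F) p) = 0 := by
    intro p
    have h1 := congrFun (hT (fun _ => (1 : ℂ)) contDiff_const) p
    have hfun : (fun p : Spt => cexp (F p) * (1 : ℂ))
        = fun q => cexp (F q) * ((1 : ℂ) + (0 : Spt →L[ℝ] ℂ) q) := by
      funext q; simp
    rw [hfun, S₀_exp_affine m ℏ F hF, S₀_one] at h1
    simp only [ContinuousLinearMap.zero_apply, add_zero, mul_zero, mul_one] at h1
    have h2 : Complex.I * ℏ * pD dirT F p +
        ((ℏ : ℂ) ^ 2 / (2 * m)) * ∑ k : Fin 3,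
          ((pD (dirS k) F p ^ 2 + pD (dirS k) (pD (dirS k) F) p)) = 0 :=
      (mul_eq_zero.mp h1).resolve_left (Complex.exp_ne_zero _)
    rw [Finset.sum_add_distrib] at h2
    exact h2
  constructor
  · intro j p
    -- test function: j-th coordinate
    set B : Spt →L[ℝ] ℂ := Complex.ofRealCLM.comp ((EuclideanSpace.proj j).comp
      (ContinuousLinearMap.fst ℝ (EuclideanSpace ℝ (Fin 3)) ℝ)) with hB
    set A : Spt →L[ℝ] ℂ := Complex.ofRealCLM.comp
      (((EuclideanSpace.proj j).comp (ContinuousLinearMap.fst ℝ (EuclideanSpace ℝ (Fin 3)) ℝ))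
        - (v j) • (ContinuousLinearMap.snd ℝ (EuclideanSpace ℝ (Fin 3)) ℝ)) with hA
    have h1 := congrFun (hT (⇑B) B.contDiff) p
    have hBT : B dirT = 0 := by simp [hB, dirT]
    have hfun : (fun p : Spt => cexp (F p) * B (p.1 - p.2 • v, p.2))
        = fun q => cexp (F q) * ((0 : ℂ) + A q) := by
      funext q
      simp [hA, hB, PiLp.sub_apply, PiLp.smul_apply, smul_eq_mul, sub_eq_add_neg]
      ring_nf
    rw [hfun, S₀_exp_affine m ℏ F hF, S₀_clm m ℏ B hBT] at h1
    have h2 : Complex.I * ℏ * (pD dirT F p * ((0:ℂ) + A p) + A dirT) +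
        ((ℏ : ℂ) ^ 2 / (2 * m)) * ∑ k : Fin 3,
          ((pD (dirS k) F p ^ 2 + pD (dirS k) (pD (dirS k) F) p) * ((0:ℂ) + A p)
            + 2 * pD (dirS k) F p * A (dirS k)) = 0 := by
      rw [mul_zero] at h1
      exact (mul_eq_zero.mp h1).resolve_left (Complex.exp_ne_zero _)
    have hAT : A dirT = -(v j : ℂ) := by
      simp [hA, dirT]
    have hAS : ∀ k : Fin 3, A (dirS k) = if j = k then (1 : ℂ) else 0 := by
      intro k
      simp [hA, dirS, EuclideanSpace.single_apply, apply_ite Complex.ofReal]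
    simp only [hAT, hAS, zero_add, mul_ite, mul_one, mul_zero] at h2
    rw [Finset.sum_add_distrib, Finset.sum_ite_eq, ← Finset.sum_mul] at h2
    simp only [Finset.mem_univ, if_true, Finset.sum_add_distrib] at h2
    have h3 := eq2 p
    set L := A p
    set Ft := pD dirT F p
    set S1 := ∑ k : Fin 3, (pD (dirS k) F p) ^ 2
    set S2 := ∑ k : Fin 3, pD (dirS k) (pD (dirS k) F) p
    set Fj := pD (dirS j) F p
    field_simp at h2 h3
    have hstep : (2*(ℏ:ℂ)) * ((ℏ:ℂ) * Fj) = (2*(ℏ:ℂ)) * (Complex.I * m * (v j)) := by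
      linear_combination h2 - L * h3
    have hkey := mul_left_cancel₀ (mul_ne_zero two_ne_zero hh') hstep
    field_simp
    linear_combination hkey
  · intro p
    have h3 := eq2 p
    have hc : ((ℏ / (2 * m) : ℝ) : ℂ) = (ℏ : ℂ) / (2 * m) := by push_cast; ring
    rw [hc]
    set Ft := pD dirT F p
    set S1 := ∑ k : Fin 3, (pD (dirS k) F p) ^ 2
    set S2 := ∑ k : Fin 3, pD (dirS k) (pD (dirS k) F) p
    field_simp at h3
    have hstep : (ℏ:ℂ) * (Complex.I * Ft * (2 * m) + (ℏ:ℂ) * (S1 + S2)) = (ℏ:ℂ) * 0 := by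
      linear_combination h3
    have hkey := mul_left_cancel₀ hh' hstep
    field_simp
    linear_combination hkey
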